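/- Fix M ≥ 0. There exists a constant C > 0, depending only on M, such that for all nonzero ξ, η ∈ ℝ² and each fixed sign s ∈ {+, −}, the 2×2 matrix product satisfies ‖Π^M_s(ξ)·Π^M_s(η)‖ ≤ C·(∠(−ξ, η) + ⟨ξ⟩^{-1} + ⟨η⟩^{-1}), where ‖·‖ denotes the operator norm on ℂ² and ⟨ξ⟩ = √(1 + |ξ|²). -/

import Mathlib

noncomputable section

/-- ℝ² as a Euclidean space. -/
abbrev E2 := EuclideanSpace ℝ (Fin 2)

/-- The Japanese bracket `⟨ξ⟩_M = √(M² + |ξ|²)`. -/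
def jb (M : ℝ) (ξ : E2) : ℝ := Real.sqrt (M ^ 2 + ‖ξ‖ ^ 2)

/-- The Pauli matrix σ¹. -/
def σ1 : Matrix (Fin 2) (Fin 2) ℂ := !![0, 1; 1, 0]

/-- The Pauli matrix σ². -/
def σ2 : Matrix (Fin 2) (Fin 2) ℂ := !![0, -Complex.I; Complex.I, 0]

/-- The Dirac matrix γ⁰. -/
def γ0 : Matrix (Fin 2) (Fin 2) ℂ := !![1, 0; 0, -1]

/-- The projection `Π^M_s(ξ) = (1/2)[I + s·⟨ξ⟩_M⁻¹(ξ₁σ¹ + ξ₂σ² + Mγ⁰)]`, `s = ±1`. -/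
def PiM (M s : ℝ) (ξ : E2) : Matrix (Fin 2) (Fin 2) ℂ :=
  (2 : ℂ)⁻¹ • (1 + ((s / jb M ξ : ℝ) : ℂ) •
    (((ξ 0 : ℝ) : ℂ) • σ1 + ((ξ 1 : ℝ) : ℂ) • σ2 + ((M : ℝ) : ℂ) • γ0))

/-- The operator norm on ℂ² of a 2×2 complex matrix. -/
def opNorm (A : Matrix (Fin 2) (Fin 2) ℂ) : ℝ := ‖Matrix.toEuclideanCLM (𝕜 := ℂ) A‖

/-!
Write `Π_s(ξ) = ½(1 + s U(ξ))` with `U(ξ) = ⟨ξ⟩_M⁻¹ (ξ₁σ¹ + ξ₂σ² + Mγ⁰)`. The matrix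
`x₁σ¹ + x₂σ² + mγ⁰` is Hermitian with square `(|x|² + m²) I`, so its operator norm is
`√(|x|² + m²)`; hence `U(ξ)` is a self-adjoint involution and `Π_s(ξ)` an orthogonal projection.
For a projection `P` of norm at most one, `PQ = P(P + Q - 1)`, which gives
`‖Π_s(ξ) Π_s(η)‖ ≤ ½ ‖U(ξ) + U(η)‖ ≤ ½ (|ξ/⟨ξ⟩_M + η/⟨η⟩_M| + |M|/⟨ξ⟩_M + |M|/⟨η⟩_M)`.
Up to the errors `1 - |ξ|/⟨ξ⟩_M ≤ |M|/⟨ξ⟩_M`, the vector term is the chord `|ξ/|ξ| + η/|η||`,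
which is at most the arc `∠(-ξ, η)`; finally `|M|/⟨ξ⟩_M ≤ (1 + |M|)/⟨ξ⟩`.
-/

section HalfInvolution

variable {𝕜 A : Type*} [RCLike 𝕜] [NormedRing A] [NormedAlgebra 𝕜 A]

lemma isIdempotentElem_half_smul_one_add {X : A} (hX : X * X = 1) :
    IsIdempotentElem ((2 : 𝕜)⁻¹ • (1 + X)) := by
  have hsq : (1 + X) * (1 + X) = (2 : 𝕜) • (1 + X) := by
    simp only [two_smul, add_mul, mul_add, one_mul, mul_one, hX]
    abel
  rw [IsIdempotentElem, smul_mul_smul_comm, hsq, smul_smul]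
  norm_num

lemma norm_half_smul_one_add_le [NormOneClass A] {X : A} (hX : ‖X‖ ≤ 1) :
    ‖(2 : 𝕜)⁻¹ • (1 + X)‖ ≤ 1 := by
  rw [norm_smul, norm_inv, RCLike.norm_two]
  have := norm_add_le (1 : A) X
  rw [norm_one] at this
  linarith

lemma IsIdempotentElem.norm_mul_le_norm_add_sub_one {P : A} (hP : IsIdempotentElem P)
    (hP1 : ‖P‖ ≤ 1) (Q : A) : ‖P * Q‖ ≤ ‖P + Q - 1‖ :=
  calc ‖P * Q‖ = ‖P * (P + Q - 1)‖ := by rw [mul_sub, mul_add, hP.eq, mul_one, add_sub_cancel_left]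
    _ ≤ ‖P‖ * ‖P + Q - 1‖ := norm_mul_le _ _
    _ ≤ ‖P + Q - 1‖ := mul_le_of_le_one_left (norm_nonneg _) hP1

lemma norm_half_smul_one_add_mul_le [NormOneClass A] {X : A} (hX : X * X = 1) (hX1 : ‖X‖ ≤ 1)
    (Y : A) : ‖(2 : 𝕜)⁻¹ • (1 + X) * (2 : 𝕜)⁻¹ • (1 + Y)‖ ≤ 2⁻¹ * ‖X + Y‖ := by
  have hsum : (2 : 𝕜)⁻¹ • (1 + X) + (2 : 𝕜)⁻¹ • (1 + Y) - 1 = (2 : 𝕜)⁻¹ • (X + Y) := by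
    module
  calc _ ≤ ‖(2 : 𝕜)⁻¹ • (1 + X) + (2 : 𝕜)⁻¹ • (1 + Y) - 1‖ :=
        (isIdempotentElem_half_smul_one_add hX).norm_mul_le_norm_add_sub_one
          (norm_half_smul_one_add_le hX1) _
    _ = 2⁻¹ * ‖X + Y‖ := by rw [hsum, norm_smul, norm_inv, RCLike.norm_two]

lemma IsSelfAdjoint.norm_eq_sqrt_of_mul_self_eq [StarRing A] [CStarRing A] [NormOneClass A]
    {a : A} (ha : IsSelfAdjoint a) {r : ℝ} (hr : 0 ≤ r) (h : a * a = (r : 𝕜) • 1) :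
    ‖a‖ = √r := by
  rw [← Real.sqrt_sq (norm_nonneg a), ← ha.norm_mul_self, h, norm_smul, norm_one, mul_one,
    RCLike.norm_ofReal, abs_of_nonneg hr]

end HalfInvolution

open scoped Matrix.Norms.L2Operator

lemma opNorm_eq_norm (A : Matrix (Fin 2) (Fin 2) ℂ) : opNorm A = ‖A‖ := rfl

def diracMatrix (x : E2) (m : ℝ) : Matrix (Fin 2) (Fin 2) ℂ :=
  ((x 0 : ℝ) : ℂ) • σ1 + ((x 1 : ℝ) : ℂ) • σ2 + ((m : ℝ) : ℂ) • γ0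

lemma isSelfAdjoint_diracMatrix (x : E2) (m : ℝ) : IsSelfAdjoint (diracMatrix x m) := by
  ext i j
  fin_cases i <;> fin_cases j <;> simp [diracMatrix, σ1, σ2, γ0, Matrix.star_apply]

lemma EuclideanSpace.norm_sq_fin_two (x : E2) : ‖x‖ ^ 2 = x 0 ^ 2 + x 1 ^ 2 := by
  rw [EuclideanSpace.norm_sq_eq, Fin.sum_univ_two, Real.norm_eq_abs, Real.norm_eq_abs, sq_abs,
    sq_abs]

lemma diracMatrix_mul_self (x : E2) (m : ℝ) :
    diracMatrix x m * diracMatrix x m = ((‖x‖ ^ 2 + m ^ 2 : ℝ) : ℂ) • 1 := by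
  rw [EuclideanSpace.norm_sq_fin_two]
  ext i j
  fin_cases i <;> fin_cases j <;>
    simp [diracMatrix, σ1, σ2, γ0, Matrix.mul_apply, Fin.sum_univ_two]
  · linear_combination (-((x 1 : ℝ) : ℂ) ^ 2) * Complex.I_sq
  · ring
  · ring
  · linear_combination (-((x 1 : ℝ) : ℂ) ^ 2) * Complex.I_sq

lemma diracMatrix_add (x y : E2) (m n : ℝ) :
    diracMatrix x m + diracMatrix y n = diracMatrix (x + y) (m + n) := by
  simp only [diracMatrix, PiLp.add_apply, Complex.ofReal_add, add_smul]
  abel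

lemma ofReal_smul_diracMatrix (c : ℝ) (x : E2) (m : ℝ) :
    (c : ℂ) • diracMatrix x m = diracMatrix (c • x) (c * m) := by
  simp only [diracMatrix, PiLp.smul_apply, smul_eq_mul, Complex.ofReal_mul, smul_add, smul_smul]

lemma norm_diracMatrix (x : E2) (m : ℝ) : ‖diracMatrix x m‖ = √(‖x‖ ^ 2 + m ^ 2) :=
  (isSelfAdjoint_diracMatrix x m).norm_eq_sqrt_of_mul_self_eq (by positivity)
    (diracMatrix_mul_self x m)

lemma norm_diracMatrix_le (x : E2) (m : ℝ) : ‖diracMatrix x m‖ ≤ ‖x‖ + |m| := by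
  rw [norm_diracMatrix, Real.sqrt_le_left (by positivity), ← sq_abs m]
  nlinarith [norm_nonneg x, abs_nonneg m]

section JapaneseBracket

variable {M : ℝ} {ξ : E2}

lemma jb_pos (hξ : ξ ≠ 0) : 0 < jb M ξ :=
  Real.sqrt_pos.mpr (by have := norm_pos_iff.mpr hξ; positivity)

lemma jb_one_pos (ξ : E2) : 0 < jb 1 ξ :=
  Real.sqrt_pos.mpr (by positivity)

lemma jb_sq (M : ℝ) (ξ : E2) : jb M ξ ^ 2 = M ^ 2 + ‖ξ‖ ^ 2 :=
  Real.sq_sqrt (by positivity)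

lemma norm_le_jb (M : ℝ) (ξ : E2) : ‖ξ‖ ≤ jb M ξ :=
  Real.le_sqrt_of_sq_le (by nlinarith [sq_nonneg M])

lemma jb_le_abs_add_norm (M : ℝ) (ξ : E2) : jb M ξ ≤ |M| + ‖ξ‖ :=
  Real.sqrt_le_iff.mpr ⟨by positivity, by nlinarith [norm_nonneg ξ, abs_nonneg M, sq_abs M]⟩

lemma abs_le_jb (M : ℝ) (ξ : E2) : |M| ≤ jb M ξ :=
  Real.abs_le_sqrt (by nlinarith [sq_nonneg ‖ξ‖])

lemma abs_div_jb_le (hξ : ξ ≠ 0) : |M| / jb M ξ ≤ (1 + |M|) / jb 1 ξ := by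
  rw [div_le_div_iff₀ (jb_pos hξ) (jb_one_pos ξ)]
  have h1 : jb 1 ξ ≤ 1 + ‖ξ‖ := by simpa using jb_le_abs_add_norm 1 ξ
  nlinarith [norm_le_jb M ξ, abs_le_jb M ξ, abs_nonneg M]

lemma abs_inv_jb_mul_norm_sub_one_le (hξ : ξ ≠ 0) :
    |(jb M ξ)⁻¹ * ‖ξ‖ - 1| ≤ |M| / jb M ξ := by
  have hj := jb_pos (M := M) hξ
  have h1 : (jb M ξ)⁻¹ * ‖ξ‖ ≤ 1 := inv_mul_le_one_of_le₀ (norm_le_jb M ξ) hj.le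
  have h2 : (1 - (jb M ξ)⁻¹ * ‖ξ‖) * jb M ξ = jb M ξ - ‖ξ‖ := by field_simp
  rw [abs_sub_comm, abs_of_nonneg (by linarith), le_div_iff₀ hj, h2]
  linarith [jb_le_abs_add_norm M ξ]

end JapaneseBracket

namespace InnerProductGeometry

variable {V : Type*} [NormedAddCommGroup V] [InnerProductSpace ℝ V]

lemma norm_sub_le_angle {u v : V} (hu : ‖u‖ = 1) (hv : ‖v‖ = 1) : ‖u - v‖ ≤ angle u v := by
  have hcos : ‖u - v‖ * ‖u - v‖ = 2 - 2 * Real.cos (angle u v) := by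
    rw [norm_sub_sq_eq_norm_sq_add_norm_sq_sub_two_mul_norm_mul_norm_mul_cos_angle, hu, hv]
    ring
  have := Real.one_sub_sq_div_two_le_cos (x := angle u v)
  exact abs_le_of_sq_le_sq' (by nlinarith) (angle_nonneg u v) |>.2

lemma norm_inv_norm_smul_add_le_angle_neg {x y : V} (hx : x ≠ 0) (hy : y ≠ 0) :
    ‖‖x‖⁻¹ • x + ‖y‖⁻¹ • y‖ ≤ angle (-x) y := by
  have hx' : 0 < ‖x‖⁻¹ := inv_pos.mpr (norm_pos_iff.mpr hx)
  have hy' : 0 < ‖y‖⁻¹ := inv_pos.mpr (norm_pos_iff.mpr hy)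
  calc ‖‖x‖⁻¹ • x + ‖y‖⁻¹ • y‖ = ‖‖x‖⁻¹ • -x - ‖y‖⁻¹ • y‖ := by
        rw [← norm_neg, smul_neg, neg_add, sub_eq_add_neg]
    _ ≤ angle (‖x‖⁻¹ • -x) (‖y‖⁻¹ • y) := by
        apply norm_sub_le_angle <;> rw [norm_smul, norm_inv, norm_norm]
        · rw [norm_neg, inv_mul_cancel₀ (norm_ne_zero_iff.mpr hx)]
        · rw [inv_mul_cancel₀ (norm_ne_zero_iff.mpr hy)]
    _ = angle (-x) y := by rw [angle_smul_left_of_pos _ _ hx', angle_smul_right_of_pos _ _ hy']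

lemma norm_smul_sub_inv_norm_smul (a : ℝ) {x : V} (hx : x ≠ 0) :
    ‖a • x - ‖x‖⁻¹ • x‖ = |a * ‖x‖ - 1| := by
  have hx' : ‖x‖ ≠ 0 := norm_ne_zero_iff.mpr hx
  have : (a - ‖x‖⁻¹) * ‖x‖ = a * ‖x‖ - 1 := by field_simp
  rw [← sub_smul, norm_smul, Real.norm_eq_abs, ← this, abs_mul, abs_norm]

lemma norm_smul_add_smul_le_angle_neg (a b : ℝ) {x y : V} (hx : x ≠ 0) (hy : y ≠ 0) :
    ‖a • x + b • y‖ ≤ angle (-x) y + |a * ‖x‖ - 1| + |b * ‖y‖ - 1| := by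
  rw [← norm_smul_sub_inv_norm_smul a hx, ← norm_smul_sub_inv_norm_smul b hy]
  calc ‖a • x + b • y‖
      = ‖(‖x‖⁻¹ • x + ‖y‖⁻¹ • y) + (a • x - ‖x‖⁻¹ • x) + (b • y - ‖y‖⁻¹ • y)‖ := by
        congr 1; abel
    _ ≤ ‖‖x‖⁻¹ • x + ‖y‖⁻¹ • y‖ + ‖a • x - ‖x‖⁻¹ • x‖ + ‖b • y - ‖y‖⁻¹ • y‖ := norm_add₃_le
    _ ≤ _ := by grw [norm_inv_norm_smul_add_le_angle_neg hx hy]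

end InnerProductGeometry

def normalizedDirac (M : ℝ) (ξ : E2) : Matrix (Fin 2) (Fin 2) ℂ :=
  diracMatrix ((jb M ξ)⁻¹ • ξ) ((jb M ξ)⁻¹ * M)

lemma PiM_eq_half_smul_one_add (M s : ℝ) (ξ : E2) :
    PiM M s ξ = (2 : ℂ)⁻¹ • (1 + (s : ℂ) • normalizedDirac M ξ) := by
  rw [normalizedDirac, ← ofReal_smul_diracMatrix, smul_smul, ← Complex.ofReal_mul,
    ← div_eq_mul_inv]
  rfl

lemma normalizedDirac_mul_self {M : ℝ} {ξ : E2} (hξ : ξ ≠ 0) :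
    normalizedDirac M ξ * normalizedDirac M ξ = 1 := by
  have hj := (jb_pos (M := M) hξ).ne'
  have h : ‖(jb M ξ)⁻¹ • ξ‖ ^ 2 + ((jb M ξ)⁻¹ * M) ^ 2 = 1 := by
    rw [norm_smul, Real.norm_eq_abs, mul_pow, sq_abs, mul_pow, ← mul_add, add_comm, ← jb_sq]
    field_simp
  rw [normalizedDirac, diracMatrix_mul_self, h, Complex.ofReal_one, one_smul]

lemma norm_normalizedDirac {M : ℝ} {ξ : E2} (hξ : ξ ≠ 0) : ‖normalizedDirac M ξ‖ = 1 := by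
  have := (isSelfAdjoint_diracMatrix _ _).norm_eq_sqrt_of_mul_self_eq (𝕜 := ℂ) zero_le_one
    (by rw [RCLike.ofReal_one, one_smul]; exact normalizedDirac_mul_self (M := M) hξ)
  rwa [Real.sqrt_one] at this

open InnerProductGeometry in
lemma norm_PiM_mul_PiM_le (M : ℝ) {s : ℝ} (hs : |s| = 1) {ξ η : E2} (hξ : ξ ≠ 0) (hη : η ≠ 0) :
    ‖PiM M s ξ * PiM M s η‖ ≤ 2⁻¹ * angle (-ξ) η + |M| / jb M ξ + |M| / jb M η := by
  have hsC : ‖(s : ℂ)‖ = 1 := by rw [Complex.norm_real, Real.norm_eq_abs, hs]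
  have hss : (s : ℂ) * s = 1 := by rw [← Complex.ofReal_mul, ← abs_mul_abs_self, hs]; simp
  rw [PiM_eq_half_smul_one_add, PiM_eq_half_smul_one_add]
  calc _ ≤ 2⁻¹ * ‖(s : ℂ) • normalizedDirac M ξ + (s : ℂ) • normalizedDirac M η‖ :=
        norm_half_smul_one_add_mul_le
          (by rw [smul_mul_smul_comm, normalizedDirac_mul_self hξ, hss, one_smul])
          (by rw [norm_smul, hsC, norm_normalizedDirac hξ, one_mul]) _
    _ = 2⁻¹ * ‖diracMatrix ((jb M ξ)⁻¹ • ξ + (jb M η)⁻¹ • η)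
          ((jb M ξ)⁻¹ * M + (jb M η)⁻¹ * M)‖ := by
        rw [← smul_add, norm_smul, hsC, one_mul, normalizedDirac, normalizedDirac, diracMatrix_add]
    _ ≤ 2⁻¹ * ((angle (-ξ) η + |(jb M ξ)⁻¹ * ‖ξ‖ - 1| + |(jb M η)⁻¹ * ‖η‖ - 1|)
          + (|M| / jb M ξ + |M| / jb M η)) := by
        grw [norm_diracMatrix_le, norm_smul_add_smul_le_angle_neg _ _ hξ hη, abs_add_le]
        rw [abs_mul, abs_mul, abs_inv, abs_inv, abs_of_pos (jb_pos hξ), abs_of_pos (jb_pos hη),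
          inv_mul_eq_div (jb M ξ) |M|, inv_mul_eq_div (jb M η) |M|]
    _ ≤ _ := by
        linarith [abs_inv_jb_mul_norm_sub_one_le (M := M) hξ,
          abs_inv_jb_mul_norm_sub_one_le (M := M) hη]

theorem stmt5_general (M : ℝ) :
    ∃ C : ℝ, 0 < C ∧ ∀ (s : ℝ), (s = 1 ∨ s = -1) → ∀ (ξ η : E2), ξ ≠ 0 → η ≠ 0 →
      opNorm (PiM M s ξ * PiM M s η) ≤
        C * (InnerProductGeometry.angle (-ξ) η + (jb 1 ξ)⁻¹ + (jb 1 η)⁻¹) := by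
  refine ⟨1 + |M|, by positivity, fun s hs ξ η hξ hη => ?_⟩
  have hs1 : |s| = 1 := by rcases hs with rfl | rfl <;> simp
  rw [opNorm_eq_norm]
  calc ‖PiM M s ξ * PiM M s η‖
      ≤ 2⁻¹ * InnerProductGeometry.angle (-ξ) η + |M| / jb M ξ + |M| / jb M η :=
        norm_PiM_mul_PiM_le M hs1 hξ hη
    _ ≤ 2⁻¹ * InnerProductGeometry.angle (-ξ) η + (1 + |M|) / jb 1 ξ + (1 + |M|) / jb 1 η := by
        grw [abs_div_jb_le hξ, abs_div_jb_le hη]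
    _ ≤ (1 + |M|) * (InnerProductGeometry.angle (-ξ) η + (jb 1 ξ)⁻¹ + (jb 1 η)⁻¹) := by
        rw [div_eq_mul_inv, div_eq_mul_inv]
        nlinarith [InnerProductGeometry.angle_nonneg (-ξ) η, abs_nonneg M]

theorem stmt5 (M : ℝ) (hM : 0 ≤ M) :
    ∃ C : ℝ, 0 < C ∧ ∀ (s : ℝ), (s = 1 ∨ s = -1) → ∀ (ξ η : E2), ξ ≠ 0 → η ≠ 0 →
      opNorm (PiM M s ξ * PiM M s η) ≤
        C * (InnerProductGeometry.angle (-ξ) η + (jb 1 ξ)⁻¹ + (jb 1 η)⁻¹) :=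
  stmt5_general M
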